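/- For every binary word w and every integer k ≥ 0, one has 2·ρ(w·0·1^{k+1}) = ρ(w·0·1^k) + ρ(w·1) in ℚ. (This is Case 2 of the proposition that the dyadic rationals a, b, c of the three regions around any bifurcation of a binary tree satisfy 2b = a + c.) -/

import Mathlib

/-- `ρ(a₁ ⋯ aₙ) = Σ_{i=1}^n aᵢ / 2^i`, defined recursively on the binary word. -/
def rho : List Bool → ℚ
  | [] => 0
  | a :: t => ((if a then 1 else 0) + rho t) / 2

/-! Since `ρ` is affine in the tail of a word, `ρ(u · v) = ρ(u) + ρ(v) / 2^|u|`, the identity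
reduces to the case of the empty prefix `w`, where `ρ(0 · 1^k) = (1 - 2^{-k}) / 2` makes it a
direct computation. -/

@[simp]
lemma rho_nil : rho [] = 0 := rfl

@[simp]
lemma rho_cons (a : Bool) (t : List Bool) :
    rho (a :: t) = ((if a then 1 else 0) + rho t) / 2 := rfl

@[simp]
lemma rho_true_cons (t : List Bool) : rho (true :: t) = (1 + rho t) / 2 := by
  simp

@[simp]
lemma rho_false_cons (t : List Bool) : rho (false :: t) = rho t / 2 := by
  simp

lemma rho_append (u v : List Bool) : rho (u ++ v) = rho u + rho v / 2 ^ u.length := by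
  induction u with
  | nil => simp
  | cons a t ih =>
    rw [List.cons_append, rho_cons, rho_cons, ih, List.length_cons, pow_succ]
    ring

lemma rho_replicate_true (k : ℕ) : rho (List.replicate k true) = 1 - (1 / 2) ^ k := by
  induction k with
  | zero => simp
  | succ n ih =>
    rw [List.replicate_succ, rho_true_cons, ih]
    ring

lemma two_mul_rho_zero_ones_succ (k : ℕ) :
    2 * rho (false :: List.replicate (k + 1) true) =
      rho (false :: List.replicate k true) + rho [true] := by
  simp only [rho_true_cons, rho_false_cons, rho_nil, rho_replicate_true]
  ring

/-- For every binary word `w` and every integer `k ≥ 0`,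
`2 · ρ(w · 0 · 1^{k+1}) = ρ(w · 0 · 1^k) + ρ(w · 1)`. -/
theorem two_mul_rho_append_zero_ones (w : List Bool) (k : ℕ) :
    2 * rho (w ++ [false] ++ List.replicate (k + 1) true) =
      rho (w ++ [false] ++ List.replicate k true) + rho (w ++ [true]) := by
  simp only [List.append_assoc, List.singleton_append, rho_append]
  linear_combination (2 ^ w.length)⁻¹ * two_mul_rho_zero_ones_succ k
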